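/- Let t ≥ 1 and c ≥ 1 be natural numbers. If c divides p^t − 1 for all but finitely many prime numbers p, then c divides N_t. -/

import Mathlib

/-!
Dirichlet's theorem provides primes `p` in every unit residue class with `c ∣ p ^ t - 1`, and
each such `p` bounds the exponent of a prime `q` in `c` by `v_q (p ^ t - 1)`. A primitive root
`p` modulo `q` forces `q - 1 ∣ t`. For odd `q`, `p ≡ 1 + q [MOD q ^ 2]` and lifting the exponent
give `v_q (p ^ t - 1) = v_q t + 1`; for `q = 2`, `p ≡ 3 [MOD 8]` gives `v_2 t + 2` when `t` is
even, and `p ≡ 3 [MOD 4]` gives `1` when `t` is odd. These are the exponents of `q` in `N t`.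
-/

/-- For `t ∈ ℕ`: `N 0 = 0`; `N t = 2` for odd `t`;
`N t = 2 * ∏_{p prime, (p-1) ∣ t} p^(v_p(t)+1)` for even positive `t`.
(Any prime `p` with `(p-1) ∣ t` satisfies `p ≤ t + 1 < t + 2`.) -/
def Npaper (t : ℕ) : ℕ :=
  if t = 0 then 0
  else if t % 2 = 1 then 2
  else 2 * ∏ p ∈ Finset.filter (fun p => p.Prime ∧ (p - 1) ∣ t) (Finset.range (t + 2)),
      p ^ (t.factorization p + 1)

theorem padicValNat_eq_of_mod_pow_succ_eq {q n k : ℕ} [hq : Fact q.Prime]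
    (h : n % q ^ (k + 1) = q ^ k) : padicValNat q n = k := by
  have hn : n = q ^ k * (q * (n / q ^ (k + 1)) + 1) := by
    conv_lhs => rw [← Nat.div_add_mod n (q ^ (k + 1)), h]
    ring
  have hndvd : ¬ q ∣ q * (n / q ^ (k + 1)) + 1 :=
    (Nat.dvd_add_right (dvd_mul_right _ _)).not.mpr hq.out.not_dvd_one
  rw [hn, padicValNat.mul (pow_ne_zero _ hq.out.ne_zero) (by omega), padicValNat.prime_pow,
    padicValNat.eq_zero_of_not_dvd hndvd, add_zero]

theorem natCast_pow_eq_one_of_dvd_pow_sub_one {m p t : ℕ} (hp : p ≠ 0) (h : m ∣ p ^ t - 1) :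
    (p : ZMod m) ^ t = 1 := by
  rw [← ZMod.natCast_eq_zero_iff, Nat.cast_sub (Nat.one_le_pow _ _ (Nat.pos_of_ne_zero hp)),
    sub_eq_zero] at h
  exact_mod_cast h

theorem le_padicValNat_pow_sub_one {q k c p t : ℕ} [Fact q.Prime] (hp : 1 < p) (ht : t ≠ 0)
    (hqk : q ^ k ∣ c) (hc : c ∣ p ^ t - 1) : k ≤ padicValNat q (p ^ t - 1) :=
  (padicValNat_dvd_iff_le (Nat.sub_ne_zero_of_lt (Nat.one_lt_pow ht hp))).mp (hqk.trans hc)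

def DvdPowSubOneForAlmostAllPrimes (c t : ℕ) : Prop :=
  {p : ℕ | p.Prime ∧ ¬ c ∣ p ^ t - 1}.Finite

section AlmostAllPrimes

variable {t c : ℕ}

theorem exists_prime_natCast_eq_and_dvd_pow_sub_one
    (h : DvdPowSubOneForAlmostAllPrimes c t) {m : ℕ} [NeZero m] {a : ZMod m}
    (ha : IsUnit a) : ∃ p : ℕ, p.Prime ∧ (p : ZMod m) = a ∧ c ∣ p ^ t - 1 := by
  obtain ⟨p, ⟨hp, hpa⟩, hpc⟩ :=
    ((Nat.infinite_setOfPred_prime_and_eq_mod ha).sdiff h).nonempty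
  exact ⟨p, hp, hpa, not_not.mp fun hn => hpc ⟨hp, hn⟩⟩

theorem sub_one_dvd_of_prime_dvd (h : DvdPowSubOneForAlmostAllPrimes c t) {q : ℕ}
    (hq : q.Prime) (hqc : q ∣ c) : q - 1 ∣ t := by
  have := Fact.mk hq
  obtain ⟨g, hg⟩ := isCyclic_iff_exists_orderOf_eq_natCard.mp
    (inferInstance : IsCyclic (ZMod q)ˣ)
  obtain ⟨p, hp, hpg, hpc⟩ := exists_prime_natCast_eq_and_dvd_pow_sub_one h g.isUnit
  have hgt : g ^ t = 1 := Units.ext <| by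
    rw [Units.val_pow_eq_pow_val, ← hpg,
      natCast_pow_eq_one_of_dvd_pow_sub_one hp.ne_zero (hqc.trans hpc), Units.val_one]
  rw [← ZMod.card_units q, ← Nat.card_eq_fintype_card, ← hg]
  exact orderOf_dvd_of_pow_eq_one hgt

theorem le_padicValNat_add_one_of_pow_dvd
    (h : DvdPowSubOneForAlmostAllPrimes c t) (ht : t ≠ 0) {q k : ℕ} (hq : q.Prime)
    (hqo : Odd q) (hqk : q ^ k ∣ c) : k ≤ padicValNat q t + 1 := by
  have := Fact.mk hq
  have hq2 : (q : ZMod (q ^ 2)) ^ 2 = 0 := by exact_mod_cast ZMod.natCast_self (q ^ 2)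
  have hunit : IsUnit (1 + q : ZMod (q ^ 2)) :=
    IsUnit.of_mul_eq_one (1 - q) (by linear_combination -hq2)
  obtain ⟨p, hp, hpq, hpc⟩ := exists_prime_natCast_eq_and_dvd_pow_sub_one h hunit
  have hmod : (p - 1) % q ^ (1 + 1) = q ^ 1 := by
    have hcast : ((p - 1 : ℕ) : ZMod (q ^ 2)) = (q : ℕ) := by
      rw [Nat.cast_sub hp.one_le, hpq]
      ring
    rw [pow_one, ← ZMod.val_natCast, hcast, ZMod.val_natCast]
    exact Nat.mod_eq_of_lt (lt_self_pow₀ hq.one_lt one_lt_two)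
  have hv : padicValNat q (p - 1) = 1 := padicValNat_eq_of_mod_pow_succ_eq hmod
  have hqp1 : q ∣ p - 1 := dvd_of_one_le_padicValNat hv.ge
  have hqp : ¬ q ∣ p := fun hqp => hq.not_dvd_one <| by
    simpa [Nat.sub_sub_self hp.one_le] using Nat.dvd_sub hqp hqp1
  calc k ≤ padicValNat q (p ^ t - 1) := le_padicValNat_pow_sub_one hp.one_lt ht hqk hpc
    _ = padicValNat q t + 1 := by
      rw [← one_pow t, padicValNat.pow_sub_pow hqo hp.one_lt (by simpa using hqp1) hqp ht, hv,
        one_pow, add_comm]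

theorem le_padicValNat_two_add_two_of_two_pow_dvd
    (h : DvdPowSubOneForAlmostAllPrimes c t) (ht : t ≠ 0) (hte : Even t) {k : ℕ}
    (hk : 2 ^ k ∣ c) : k ≤ padicValNat 2 t + 2 := by
  obtain ⟨p, hp, hp3, hpc⟩ :=
    exists_prime_natCast_eq_and_dvd_pow_sub_one h (show IsUnit (3 : ZMod 8) by decide)
  have hp8 : p % 8 = 3 := by rw [← ZMod.val_natCast, hp3]; rfl
  have hv₁ : padicValNat 2 (p - 1) = 1 := padicValNat_eq_of_mod_pow_succ_eq (by omega)
  have hv₂ : padicValNat 2 (p + 1) = 2 := padicValNat_eq_of_mod_pow_succ_eq (by omega)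
  have hlte := padicValNat.pow_two_sub_one hp.one_lt (by omega) ht hte
  have := le_padicValNat_pow_sub_one hp.one_lt ht hk hpc
  omega

theorem le_one_of_two_pow_dvd_of_odd (h : DvdPowSubOneForAlmostAllPrimes c t) (hto : Odd t)
    {k : ℕ} (hk : 2 ^ k ∣ c) : k ≤ 1 := by
  obtain ⟨p, hp, hp3, hpc⟩ :=
    exists_prime_natCast_eq_and_dvd_pow_sub_one h (isUnit_one.neg : IsUnit (-1 : ZMod 4))
  have hcast : ((p ^ t - 1 : ℕ) : ZMod 4) = 2 := by
    rw [Nat.cast_sub (Nat.one_le_pow _ _ hp.pos), Nat.cast_pow, hp3, hto.neg_one_pow]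
    decide
  have hmod : (p ^ t - 1) % 2 ^ (1 + 1) = 2 ^ 1 := by
    rw [← ZMod.val_natCast, hcast]; rfl
  calc k ≤ padicValNat 2 (p ^ t - 1) := le_padicValNat_pow_sub_one hp.one_lt hto.pos.ne' hk hpc
    _ = 1 := padicValNat_eq_of_mod_pow_succ_eq hmod

end AlmostAllPrimes

theorem Npaper_of_odd {t : ℕ} (hto : Odd t) : Npaper t = 2 := by
  simp [Npaper, hto.pos.ne', Nat.odd_iff.mp hto]

theorem two_mul_pow_padicValNat_succ_dvd_Npaper {t q : ℕ} (ht : t ≠ 0) (hte : Even t)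
    (hq : q.Prime) (hqt : q - 1 ∣ t) : 2 * q ^ (padicValNat q t + 1) ∣ Npaper t := by
  have hmem : q ∈ Finset.filter (fun p => p.Prime ∧ (p - 1) ∣ t) (Finset.range (t + 2)) := by
    have := Nat.le_of_dvd (Nat.pos_of_ne_zero ht) hqt
    exact Finset.mem_filter.mpr ⟨Finset.mem_range.mpr (by omega), hq, hqt⟩
  rw [Npaper, if_neg ht, if_neg (by rw [Nat.even_iff.mp hte]; decide),
    ← Nat.factorization_def t hq]
  exact mul_dvd_mul_left 2 (Finset.dvd_prod_of_mem _ hmem)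

theorem stmt_3_general (t c : ℕ)
    (h : {p : ℕ | Nat.Prime p ∧ ¬ c ∣ p ^ t - 1}.Finite) :
    c ∣ Npaper t := by
  rcases eq_or_ne t 0 with rfl | ht
  · simp [Npaper]
  refine (Nat.dvd_iff_prime_pow_dvd_dvd _ _).mpr fun q k hq hqk => ?_
  rcases Nat.eq_zero_or_pos k with rfl | hk
  · simp
  have hqt : q - 1 ∣ t := sub_one_dvd_of_prime_dvd h hq ((dvd_pow_self q hk.ne').trans hqk)
  rcases Nat.even_or_odd t with hte | hto
  · have hN := two_mul_pow_padicValNat_succ_dvd_Npaper ht hte hq hqt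
    rcases hq.eq_two_or_odd' with rfl | hqo
    · refine (pow_dvd_pow 2 (le_padicValNat_two_add_two_of_two_pow_dvd h ht hte hqk)).trans ?_
      rwa [pow_succ']
    · exact (pow_dvd_pow q (le_padicValNat_add_one_of_pow_dvd h ht hq hqo hqk)).trans
        ((dvd_mul_left _ 2).trans hN)
  · rcases hq.eq_two_or_odd' with rfl | hqo
    · rw [Npaper_of_odd hto]
      exact (pow_dvd_pow 2 (le_one_of_two_pow_dvd_of_odd h hto hqk)).trans (by norm_num)
    · have hte : Even t := even_iff_two_dvd.mpr ((Nat.Odd.sub_odd hqo odd_one).two_dvd.trans hqt)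
      exact (Nat.not_even_iff_odd.mpr hto hte).elim

/-- If `c` divides `p^t - 1` for all but finitely many primes `p`, then `c ∣ N t`. -/
theorem stmt_3 (t c : ℕ) (ht : 1 ≤ t) (hc : 1 ≤ c)
    (h : {p : ℕ | Nat.Prime p ∧ ¬ c ∣ p ^ t - 1}.Finite) :
    c ∣ Npaper t :=
  stmt_3_general t c h
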